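/- arXiv:2302.02290 — 6 statements merged into one kernel-verified Lean document; each statement's English description precedes it below -/
import Mathlib

section
/- Let G = (V,E,w) be a finite undirected graph with positive integer edge weights and let k > 0. The collection of all maximal k-edge-connected vertex sets of G — i.e., all sets U ⊆ V such that G[U] is k-edge-connected and no strict superset U' ⊋ U has G[U'] k-edge-connected — is a partition of V: the sets are nonempty, pairwise disjoint, and their union is V (in particular this collection is unique). -/
open Finset

/-- `G[U]` is `k`-edge-connected: every nonempty proper subset `S ⊊ U` has total
weight of edges of `G[U]` joining `S` to `U \ S` at least `k`. -/
def KConnOn {V : Type*} [DecidableEq V] (w : V → V → ℕ) (k : ℕ) (U : Finset V) : Prop :=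
  ∀ S : Finset V, S ⊆ U → S.Nonempty → S ≠ U → k ≤ ∑ u ∈ S, ∑ v ∈ U \ S, w u v

/-- `U` is a maximal `k`-edge-connected vertex set. -/
def IsMaxKConn {V : Type*} [DecidableEq V] (w : V → V → ℕ) (k : ℕ) (U : Finset V) : Prop :=
  KConnOn w k U ∧ ∀ U' : Finset V, U ⊂ U' → ¬ KConnOn w k U'

lemma cut_mono {V : Type*} [DecidableEq V] (w : V → V → ℕ) {S' S T' T : Finset V}
    (h1 : S' ⊆ S) (h2 : T' ⊆ T) :
    ∑ u ∈ S', ∑ v ∈ T', w u v ≤ ∑ u ∈ S, ∑ v ∈ T, w u v :=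
  le_trans (Finset.sum_le_sum fun _ _ => Finset.sum_le_sum_of_subset h2)
    (Finset.sum_le_sum_of_subset h1)

lemma kconn_singleton {V : Type*} [DecidableEq V] (w : V → V → ℕ) (k : ℕ) (v : V) :
    KConnOn w k {v} := by
  intro S hS hne hneq
  rcases Finset.subset_singleton_iff.mp hS with h | h
  · exact absurd h (Finset.nonempty_iff_ne_empty.mp hne)
  · exact absurd h hneq

lemma kconn_union {V : Type*} [DecidableEq V] {w : V → V → ℕ} {k : ℕ} {A B : Finset V}
    (hA : KConnOn w k A) (hB : KConnOn w k B) (hAB : (A ∩ B).Nonempty) :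
    KConnOn w k (A ∪ B) := by
  intro S hS hne hneq
  by_cases h1 : (S ∩ A).Nonempty ∧ S ∩ A ≠ A
  · refine le_trans (hA (S ∩ A) Finset.inter_subset_right h1.1 h1.2)
      (cut_mono w Finset.inter_subset_left ?_)
    intro x hx
    simp only [Finset.mem_sdiff, Finset.mem_inter, Finset.mem_union] at *
    exact ⟨Or.inl hx.1, fun hxS => hx.2 ⟨hxS, hx.1⟩⟩
  · by_cases h2 : (S ∩ B).Nonempty ∧ S ∩ B ≠ B
    · refine le_trans (hB (S ∩ B) Finset.inter_subset_right h2.1 h2.2)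
        (cut_mono w Finset.inter_subset_left ?_)
      intro x hx
      simp only [Finset.mem_sdiff, Finset.mem_inter, Finset.mem_union] at *
      exact ⟨Or.inr hx.1, fun hxS => hx.2 ⟨hxS, hx.1⟩⟩
    · exfalso
      push_neg at h1 h2
      rcases (S ∩ A).eq_empty_or_nonempty with hA0 | hAne
      · rcases (S ∩ B).eq_empty_or_nonempty with hB0 | hBne
        · obtain ⟨x, hx⟩ := hne
          rcases Finset.mem_union.mp (hS hx) with hxA | hxB
          · exact absurd (Finset.mem_inter.mpr ⟨hx, hxA⟩) (by simp [hA0])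
          · exact absurd (Finset.mem_inter.mpr ⟨hx, hxB⟩) (by simp [hB0])
        · have hSB := h2 hBne
          obtain ⟨x, hx⟩ := hAB
          have hxA := (Finset.mem_inter.mp hx).1
          have hxB := (Finset.mem_inter.mp hx).2
          have hxS : x ∈ S := (Finset.mem_inter.mp (hSB.symm ▸ hxB : x ∈ S ∩ B)).1
          exact absurd (Finset.mem_inter.mpr ⟨hxS, hxA⟩) (by simp [hA0])
      · have hSA := h1 hAne
        rcases (S ∩ B).eq_empty_or_nonempty with hB0 | hBne
        · obtain ⟨x, hx⟩ := hAB
          have hxA := (Finset.mem_inter.mp hx).1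
          have hxB := (Finset.mem_inter.mp hx).2
          have hxS : x ∈ S := (Finset.mem_inter.mp (hSA.symm ▸ hxA : x ∈ S ∩ A)).1
          exact absurd (Finset.mem_inter.mpr ⟨hxS, hxB⟩) (by simp [hB0])
        · have hSB := h2 hBne
          apply hneq
          apply Finset.Subset.antisymm hS
          intro x hx
          rcases Finset.mem_union.mp hx with hxA | hxB
          · exact (Finset.mem_inter.mp (hSA.symm ▸ hxA : x ∈ S ∩ A)).1
          · exact (Finset.mem_inter.mp (hSB.symm ▸ hxB : x ∈ S ∩ B)).1

/-- The collection of maximal `k`-edge-connected vertex sets forms a partition of `V`. -/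
theorem maxKConn_partition {V : Type*} [Fintype V] [DecidableEq V] [Nonempty V]
    (w : V → V → ℕ) (hsymm : ∀ u v, w u v = w v u) (hloop : ∀ v, w v v = 0)
    (k : ℕ) (hk : 0 < k) :
    (∀ U : Finset V, IsMaxKConn w k U → U.Nonempty) ∧
    (∀ U U' : Finset V, IsMaxKConn w k U → IsMaxKConn w k U' → U ≠ U' → Disjoint U U') ∧
    (∀ v : V, ∃ U : Finset V, IsMaxKConn w k U ∧ v ∈ U) := by
  classical
  refine ⟨?_, ?_, ?_⟩
  · rintro U ⟨hK, hmax⟩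
    rw [Finset.nonempty_iff_ne_empty]
    rintro rfl
    obtain ⟨v⟩ := ‹Nonempty V›
    exact hmax {v} (Finset.empty_ssubset.mpr (Finset.singleton_nonempty v)) (kconn_singleton w k v)
  · rintro U U' ⟨hK, hmax⟩ ⟨hK', hmax'⟩ hne
    by_contra hdis
    obtain ⟨x, hxU, hxU'⟩ := Finset.not_disjoint_iff.mp hdis
    have hunion := kconn_union hK hK' ⟨x, Finset.mem_inter.mpr ⟨hxU, hxU'⟩⟩
    have h1 : U' ⊆ U := by
      by_contra h
      exact hmax (U ∪ U')
        (Finset.ssubset_iff_subset_ne.mpr ⟨Finset.subset_union_left,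
          fun he => h (he ▸ Finset.subset_union_right)⟩) hunion
    have h2 : U ⊆ U' := by
      by_contra h
      exact hmax' (U ∪ U')
        (Finset.ssubset_iff_subset_ne.mpr ⟨Finset.subset_union_right,
          fun he => h (he ▸ Finset.subset_union_left)⟩) hunion
    exact hne (Finset.Subset.antisymm h2 h1)
  · intro v
    have hne : (Finset.univ.filter (fun U : Finset V => KConnOn w k U ∧ v ∈ U)).Nonempty :=
      ⟨{v}, by simp [kconn_singleton w k v]⟩
    obtain ⟨U, hU, hmax0⟩ := Finset.exists_maximal hne
    have hmax : ∀ x ∈ Finset.univ.filter (fun U : Finset V => KConnOn w k U ∧ v ∈ U), ¬ U < x :=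
      fun x hx hlt => not_lt_of_ge (hmax0 hx hlt.le : x ≤ U) hlt
    simp only [Finset.mem_filter] at hU
    refine ⟨U, ⟨hU.2.1, ?_⟩, hU.2.2⟩
    intro U' hlt hKU'
    exact hmax U' (by simp [Finset.mem_filter, hKU', hlt.subset hU.2.2]) hlt
end

section
/- Let G = (V,E,w) be a finite undirected graph with positive integer edge weights, |V| ≥ 2, and let ν, k > 0. Suppose G contains no (ν,k)-extreme set, i.e., no extreme set X with vol(X) < ν and w(δ(X)) < k. Then either the global minimum cut value λ(G) = min over nonempty proper A ⊊ V of w(δ(A)) satisfies λ(G) ≥ k (so G is k-edge-connected), or λ(G) < k and every minimum cut is ν-balanced: every nonempty proper A ⊊ V with w(δ(A)) = λ(G) satisfies vol(A) ≥ ν and vol(V∖A) ≥ ν. -/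
open Finset

/-- The cut value `w(δ(A))` of the vertex set `A` in `G`. -/
def cutW {V : Type*} [Fintype V] [DecidableEq V] (w : V → V → ℕ) (A : Finset V) : ℕ :=
  ∑ u ∈ A, ∑ v ∈ Aᶜ, w u v

/-- `vol(A)`: the number of edges with at least one endpoint in `A`. -/
noncomputable def vol {V : Type*} [Fintype V] (w : V → V → ℕ) (A : Finset V) : ℕ :=
  Set.ncard {e : Sym2 V | ∃ u v, e = s(u, v) ∧ 0 < w u v ∧ (u ∈ A ∨ v ∈ A)}

/-- `X` is an extreme set: it is nonempty and every nonempty strict subset has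
strictly larger cut value. -/
def IsExtremeSet {V : Type*} [Fintype V] [DecidableEq V] (w : V → V → ℕ) (X : Finset V) : Prop :=
  X.Nonempty ∧ ∀ Y : Finset V, Y ⊂ X → Y.Nonempty → cutW w X < cutW w Y

/-- The global minimum cut value `λ(G)`. -/
noncomputable def minCut {V : Type*} [Fintype V] [DecidableEq V] (w : V → V → ℕ) : ℕ :=
  sInf {c | ∃ A : Finset V, A.Nonempty ∧ A ≠ Finset.univ ∧ cutW w A = c}

lemma vol_mono {V : Type*} [Fintype V] (w : V → V → ℕ) {X A : Finset V} (h : X ⊆ A) :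
    vol w X ≤ vol w A := by
  apply Set.ncard_le_ncard _ (Set.toFinite _)
  rintro e ⟨u, v, he, hw, hm⟩
  exact ⟨u, v, he, hw, hm.imp (fun hu => h hu) (fun hv => h hv)⟩

lemma cutW_compl {V : Type*} [Fintype V] [DecidableEq V] (w : V → V → ℕ)
    (hsymm : ∀ u v, w u v = w v u) (A : Finset V) : cutW w Aᶜ = cutW w A := by
  unfold cutW
  rw [compl_compl, Finset.sum_comm]
  exact Finset.sum_congr rfl fun u _ => Finset.sum_congr rfl fun v _ => hsymm v u

lemma exists_min_sub {V : Type*} [Fintype V] [DecidableEq V] (w : V → V → ℕ) (c : ℕ) :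
    ∀ A : Finset V, A.Nonempty → cutW w A ≤ c →
      ∃ X, X ⊆ A ∧ X.Nonempty ∧ cutW w X ≤ c ∧
        ∀ Y, Y ⊂ X → Y.Nonempty → c < cutW w Y := by
  intro A
  induction A using Finset.strongInduction with
  | _ A ih =>
    intro hA hc
    by_cases h : ∀ Y, Y ⊂ A → Y.Nonempty → c < cutW w Y
    · exact ⟨A, subset_rfl, hA, hc, h⟩
    · push_neg at h
      obtain ⟨Y, hYA, hYne, hYc⟩ := h
      obtain ⟨X, hXY, hXne, hXc, hXmin⟩ := ih Y hYA hYne hYc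
      exact ⟨X, hXY.trans hYA.subset, hXne, hXc, hXmin⟩

/-- If `G` has no `(ν,k)`-extreme set, then either `λ(G) ≥ k` (so `G` is
`k`-edge-connected) or `λ(G) < k` and every minimum cut is `ν`-balanced. -/
theorem no_extreme_set_balanced {V : Type*} [Fintype V] [DecidableEq V]
    (w : V → V → ℕ) (hsymm : ∀ u v, w u v = w v u) (hloop : ∀ v, w v v = 0)
    (hcard : 2 ≤ Fintype.card V) (ν k : ℕ) (hν : 0 < ν) (hk : 0 < k)
    (hno : ¬ ∃ X : Finset V, IsExtremeSet w X ∧ vol w X < ν ∧ cutW w X < k) :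
    k ≤ minCut w ∨
      (minCut w < k ∧ ∀ A : Finset V, A.Nonempty → A ≠ Finset.univ →
        cutW w A = minCut w → ν ≤ vol w A ∧ ν ≤ vol w Aᶜ) := by
  by_cases hkm : k ≤ minCut w
  · exact Or.inl hkm
  push_neg at hkm
  right
  refine ⟨hkm, ?_⟩
  -- key: any nonempty proper set with min cut value has vol ≥ ν
  have key : ∀ A : Finset V, A.Nonempty → A ≠ Finset.univ → cutW w A = minCut w →
      ν ≤ vol w A := by
    intro A hAne hAuniv hAcut
    obtain ⟨X, hXA, hXne, hXc, hXmin⟩ :=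
      exists_min_sub w (minCut w) A hAne (le_of_eq hAcut)
    -- X is a nonempty proper subset of univ, so minCut ≤ cutW X
    have hXuniv : X ≠ Finset.univ := by
      intro h
      exact hAuniv (Finset.eq_univ_of_forall fun v => hXA (h ▸ Finset.mem_univ v))
    have hle : minCut w ≤ cutW w X :=
      Nat.sInf_le ⟨X, hXne, hXuniv, rfl⟩
    have hXcut : cutW w X = minCut w := le_antisymm hXc hle
    have hext : IsExtremeSet w X := by
      refine ⟨hXne, fun Y hY hYne => ?_⟩
      rw [hXcut]
      exact hXmin Y hY hYne
    have hvol : ν ≤ vol w X := by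
      by_contra hv
      push_neg at hv
      exact hno ⟨X, hext, hv, by rw [hXcut]; exact hkm⟩
    exact hvol.trans (vol_mono w hXA)
  intro A hAne hAuniv hAcut
  refine ⟨key A hAne hAuniv hAcut, ?_⟩
  have hAcne : Aᶜ.Nonempty := by
    rw [Finset.nonempty_iff_ne_empty]
    intro h
    exact hAuniv (by simpa using congrArg compl h)
  have hAcuniv : Aᶜ ≠ Finset.univ := by
    intro h
    have : A = ∅ := by simpa using congrArg compl h
    exact hAne.ne_empty this
  exact key Aᶜ hAcne hAcuniv (by rw [cutW_compl w hsymm A, hAcut])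
end

section
/- Let G = (V,E,w) be a finite undirected graph with positive integer edge weights and let X ⊆ V be an extreme set of G. Then the induced subgraph G[X] is connected; consequently |X| ≤ vol(X) + 1, and in particular any extreme set X with vol(X) < ν has at most ν vertices. -/
open Finset

/-- If `X` is an extreme set of `G`, then the induced subgraph `G[X]` is connected;
consequently `|X| ≤ vol(X) + 1`, and any extreme set of volume `< ν` has at most
`ν` vertices. -/
theorem extremeSet_induced_connected {V : Type*} [Fintype V] [DecidableEq V]
    (w : V → V → ℕ) (hsymm : ∀ u v, w u v = w v u) (hloop : ∀ v, w v v = 0)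
    (X : Finset V) (hX : IsExtremeSet w X) :
    ((SimpleGraph.fromRel (fun a b => 0 < w a b)).induce (↑X : Set V)).Connected ∧
    X.card ≤ vol w X + 1 ∧
    (∀ ν : ℕ, vol w X < ν → X.card ≤ ν) := by
  classical
  obtain ⟨hne, hext⟩ := hX
  set G := SimpleGraph.fromRel (fun a b => 0 < w a b) with hGdef
  set H := G.induce (↑X : Set V) with hHdef
  -- Part 1 : connectivity
  have hconn : H.Connected := by
    rw [SimpleGraph.connected_iff]
    refine ⟨?_, ⟨⟨hne.choose, hne.choose_spec⟩⟩⟩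
    intro a b
    by_contra hab
    set Y : Finset V := X.filter (fun v => ∃ hv : v ∈ X, H.Reachable a ⟨v, hv⟩) with hYdef
    have haY : (a : V) ∈ Y := by
      simp only [hYdef, Finset.mem_filter]
      exact ⟨a.2, a.2, by rw [Subtype.coe_eta]⟩
    have hbY : (b : V) ∉ Y := by
      simp only [hYdef, Finset.mem_filter, not_and, not_exists]
      intro _ hv h
      exact hab (by rwa [Subtype.coe_eta] at h)
    have hYX : Y ⊂ X := by
      refine ⟨Finset.filter_subset _ _, fun hs => hbY (hs b.2)⟩
    -- no `w`-edge crosses from `Y` to `X \ Y`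
    have hzero : ∀ u ∈ Y, ∀ v ∈ X \ Y, w u v = 0 := by
      intro u hu v hv
      by_contra h
      have hwpos : 0 < w u v := Nat.pos_of_ne_zero h
      obtain ⟨hvX, hvY⟩ := Finset.mem_sdiff.mp hv
      have huX : u ∈ X := Finset.mem_of_subset (Finset.filter_subset _ _) hu
      have hune : u ≠ v := by
        rintro rfl; exact hvY hu
      have hadj : H.Adj ⟨u, huX⟩ ⟨v, hvX⟩ := by
        simp only [hHdef, SimpleGraph.comap_adj, Function.Embedding.coe_subtype,
          SimpleGraph.fromRel_adj, hGdef]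
        exact ⟨hune, Or.inl hwpos⟩
      have hreach : H.Reachable a ⟨u, huX⟩ := by
        simp only [hYdef, Finset.mem_filter] at hu
        obtain ⟨_, _, h⟩ := hu
        exact h
      have : H.Reachable a ⟨v, hvX⟩ := hreach.trans hadj.reachable
      exact hvY (by simp only [hYdef, Finset.mem_filter]; exact ⟨hvX, hvX, this⟩)
    -- hence `cutW w Y ≤ cutW w X`, contradicting extremality
    have hYcompl : Yᶜ = Xᶜ ∪ (X \ Y) := by
      ext v
      simp only [Finset.mem_compl, Finset.mem_union, Finset.mem_sdiff]
      by_cases hv : v ∈ X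
      · by_cases hvy : v ∈ Y <;> simp [hv, hvy]
      · have : v ∉ Y := fun h => hv (hYX.1 h)
        simp [hv, this]
    have hdisj : Disjoint (Xᶜ) (X \ Y) := by
      refine Finset.disjoint_left.mpr ?_
      intro v hv hv2
      exact (Finset.mem_compl.mp hv) (Finset.mem_sdiff.mp hv2).1
    have hle : cutW w Y ≤ cutW w X := by
      unfold cutW
      have : ∀ u ∈ Y, ∑ v ∈ Yᶜ, w u v = ∑ v ∈ Xᶜ, w u v := by
        intro u hu
        rw [hYcompl, Finset.sum_union hdisj]
        have : ∑ v ∈ X \ Y, w u v = 0 :=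
          Finset.sum_eq_zero (fun v hv => hzero u hu v hv)
        omega
      rw [Finset.sum_congr rfl this]
      exact Finset.sum_le_sum_of_subset hYX.1
    exact absurd (hext Y hYX ⟨a, haY⟩) (not_lt.mpr hle)
  refine ⟨hconn, ?_⟩
  -- Part 2 : |X| ≤ vol(X) + 1 via an injection from X \ {r} into edges
  obtain ⟨r, hr⟩ := hne
  set r0 : (↑X : Set V) := ⟨r, hr⟩ with hr0
  set S : Set (Sym2 V) :=
    {e : Sym2 V | ∃ u v, e = s(u, v) ∧ 0 < w u v ∧ (u ∈ X ∨ v ∈ X)} with hSdef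
  have key : ∀ v : (↑X : Set V), v ≠ r0 →
      ∃ u : (↑X : Set V), H.Adj v u ∧ H.dist u r0 + 1 = H.dist v r0 := by
    intro v hv
    have hd : H.dist v r0 ≠ 0 := by
      intro h
      exact hv ((hconn.dist_eq_zero_iff).mp h)
    obtain ⟨p, hp⟩ := SimpleGraph.exists_walk_of_dist_ne_zero hd
    cases p with
    | nil => exact absurd rfl hv
    | @cons _ u _ h q =>
      refine ⟨u, h, ?_⟩
      have h1 : H.dist u r0 ≤ q.length := SimpleGraph.dist_le q
      have h2 : H.dist v r0 = q.length + 1 := by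
        rw [← hp]; simp [SimpleGraph.Walk.length_cons]
      obtain ⟨q', hq'⟩ := hconn.exists_walk_length_eq_dist u r0
      have h3 : H.dist v r0 ≤ H.dist u r0 + 1 := by
        have := SimpleGraph.dist_le (SimpleGraph.Walk.cons h q')
        rwa [SimpleGraph.Walk.length_cons, hq'] at this
      omega
  -- the chosen neighbor and the corresponding edge
  have hcard : X.card - 1 ≤ vol w X := by
    set T := {v : (↑X : Set V) // v ≠ r0} with hT
    have hF : ∀ t : T, (s((t.1 : V), ((key t.1 t.2).choose : V)) : Sym2 V) ∈ S := by
      intro t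
      obtain ⟨hadj, _⟩ := (key t.1 t.2).choose_spec
      have : 0 < w (t.1 : V) ((key t.1 t.2).choose : V) := by
        simp only [hHdef, SimpleGraph.comap_adj, Function.Embedding.coe_subtype,
          SimpleGraph.fromRel_adj, hGdef] at hadj
        rcases hadj.2 with h | h
        · exact h
        · rwa [hsymm]
      exact ⟨_, _, rfl, this, Or.inl t.1.2⟩
    set F : T → S := fun t => ⟨_, hF t⟩ with hFdef
    have hinj : Function.Injective F := by
      intro t t' h
      have h' : (s((t.1 : V), ((key t.1 t.2).choose : V)) : Sym2 V)
          = s((t'.1 : V), ((key t'.1 t'.2).choose : V)) := congrArg Subtype.val h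
      rw [Sym2.eq_iff] at h'
      obtain ⟨hd, hd'⟩ := (key t.1 t.2).choose_spec
      obtain ⟨he, he'⟩ := (key t'.1 t'.2).choose_spec
      rcases h' with ⟨h1, h2⟩ | ⟨h1, h2⟩
      · exact Subtype.ext (Subtype.ext h1)
      · exfalso
        have e1 : t.1 = (key t'.1 t'.2).choose := Subtype.ext h1
        have e2 : (key t.1 t.2).choose = t'.1 := Subtype.ext h2
        rw [e2] at hd'
        rw [← e1] at he'
        omega
    have hfin : Finite S := Subtype.finite
    have h1 : Nat.card T ≤ Nat.card S := Nat.card_le_card_of_injective F hinj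
    have h2 : Nat.card S = vol w X := by
      rw [Nat.card_coe_set_eq]; rfl
    have e := (Equiv.sumCompl (fun v : (↑X : Set V) => v = r0)).symm
    have hsum : Nat.card (↑X : Set V)
        = Nat.card {v : (↑X : Set V) // v = r0} + Nat.card {v : (↑X : Set V) // ¬ v = r0} := by
      rw [Nat.card_congr e, Nat.card_sum]
    have hone : Nat.card {v : (↑X : Set V) // v = r0} = 1 := by
      rw [Nat.card_eq_fintype_card, Fintype.card_subtype_eq]
    have hXc : Nat.card (↑X : Set V) = X.card := by
      rw [Nat.card_coe_set_eq, Set.ncard_coe_finset]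
    have h3 : Nat.card T = X.card - 1 := by
      have : Nat.card T = Nat.card {v : (↑X : Set V) // ¬ v = r0} := rfl
      omega
    omega
  have h2 : X.card ≤ vol w X + 1 := by
    have := Finset.card_pos.mpr ⟨r, hr⟩
    omega
  exact ⟨h2, fun ν hν => by omega⟩
end

section
/- Let G = (V,E,w) be a finite undirected graph with positive integer edge weights, let S = {s_0, s_1, …, s_{σ−1}} ⊆ V be a set of σ ≥ 3 distinct vertices, and let k = Σ_{v∈S} deg_w(v) be the weighted volume of S, where deg_w(v) is the total weight of edges of G incident to v. Let G_S be the weighted graph obtained from G by adding weight k+1 to each of the σ cycle edges {s_i, s_{(i+1) mod σ}} for 0 ≤ i < σ (creating the edge with weight k+1 if it is absent in G). Then G contains an edge with both endpoints in S if and only if S is a (σ+1,k)-extreme set of G_S, i.e., |S| < σ+1, the cut value of S in G_S is less than k, and S is an extreme set of G_S. -/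
open Finset

/-- successor along the cycle on `Fin σ`. -/
def cnxt {σ : ℕ} (i : Fin σ) : Fin σ := ⟨((i : ℕ) + 1) % σ, Nat.mod_lt _ i.pos⟩

lemma cnxt_iterate {σ : ℕ} (i : Fin σ) (m : ℕ) :
    ((cnxt^[m] i : Fin σ) : ℕ) = ((i : ℕ) + m) % σ := by
  induction m with
  | zero => simp [Nat.mod_eq_of_lt i.isLt]
  | succ m ih =>
    rw [Function.iterate_succ_apply']
    show (((cnxt^[m] i : Fin σ) : ℕ) + 1) % σ = ((i : ℕ) + (m + 1)) % σ
    rw [ih, Nat.mod_add_mod, add_assoc]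

lemma cycle_closed_eq_univ {σ : ℕ} (T : Finset (Fin σ))
    (hcl : ∀ i ∈ T, cnxt i ∈ T) (hne : T.Nonempty) : T = univ := by
  obtain ⟨i₀, hi₀⟩ := hne
  have hit : ∀ m, cnxt^[m] i₀ ∈ T := by
    intro m
    induction m with
    | zero => exact hi₀
    | succ m ih => rw [Function.iterate_succ_apply']; exact hcl _ ih
  ext j
  simp only [mem_univ, iff_true]
  have hv : cnxt^[σ + (j : ℕ) - (i₀ : ℕ)] i₀ = j := by
    apply Fin.ext
    rw [cnxt_iterate]
    have h1 : (i₀ : ℕ) + (σ + (j : ℕ) - (i₀ : ℕ)) = σ + (j : ℕ) := by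
      have := i₀.isLt; omega
    rw [h1, Nat.add_mod_left]
    exact Nat.mod_eq_of_lt j.isLt
  rw [← hv]; exact hit _

/-- Heavy-cycle construction: `G` has an edge with both endpoints in
`S = {s 0, …, s (σ-1)}` iff `S` is a `(σ+1, k)`-extreme set of `G_S`, where
`k = Σ_{v ∈ S} deg_w v` and `G_S` adds weight `k+1` on a cycle through `S`. -/
theorem heavy_cycle_extreme_iff {V : Type*} [Fintype V] [DecidableEq V]
    (w : V → V → ℕ) (hsymm : ∀ u v, w u v = w v u) (hloop : ∀ v, w v v = 0)
    (σ : ℕ) (hσ : 3 ≤ σ) (s : Fin σ → V) (hs : Function.Injective s)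
    (k : ℕ) (hk : k = ∑ i : Fin σ, ∑ u : V, w (s i) u)
    (wS : V → V → ℕ)
    (hwS : ∀ a b, wS a b = w a b +
      (if ∃ i j : Fin σ, (j : ℕ) = ((i : ℕ) + 1) % σ ∧
          ((a = s i ∧ b = s j) ∨ (b = s i ∧ a = s j)) then k + 1 else 0)) :
    (∃ u ∈ Finset.image s Finset.univ, ∃ v ∈ Finset.image s Finset.univ,
        u ≠ v ∧ 0 < w u v) ↔
      ((Finset.image s Finset.univ).card < σ + 1 ∧
       cutW wS (Finset.image s Finset.univ) < k ∧
       IsExtremeSet wS (Finset.image s Finset.univ)) := by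
  set S : Finset V := Finset.image s Finset.univ with hS
  -- membership
  have hmem : ∀ v : V, v ∈ S ↔ ∃ i : Fin σ, s i = v := by
    intro v; simp [hS]
  -- wS agrees with w on S × Sᶜ
  have hagree : ∀ u ∈ S, ∀ v ∈ Sᶜ, wS u v = w u v := by
    intro u hu v hv
    rw [hwS]
    have : ¬ (∃ i j : Fin σ, (j : ℕ) = ((i : ℕ) + 1) % σ ∧
          ((u = s i ∧ v = s j) ∨ (v = s i ∧ u = s j))) := by
      rintro ⟨i, j, -, (⟨-, rfl⟩ | ⟨rfl, -⟩)⟩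
      · exact (mem_compl.mp hv) ((hmem _).mpr ⟨j, rfl⟩)
      · exact (mem_compl.mp hv) ((hmem _).mpr ⟨i, rfl⟩)
    rw [if_neg this, add_zero]
  have hcut_eq : cutW wS S = cutW w S := by
    unfold cutW
    apply Finset.sum_congr rfl
    intro u hu
    exact Finset.sum_congr rfl fun v hv => hagree u hu v hv
  -- cut(S) + internal = k
  have hsum : cutW w S + (∑ u ∈ S, ∑ v ∈ S, w u v) = k := by
    unfold cutW
    rw [← Finset.sum_add_distrib]
    have h1 : ∀ u : V, (∑ v ∈ Sᶜ, w u v) + (∑ v ∈ S, w u v) = ∑ v : V, w u v := by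
      intro u
      rw [add_comm]
      exact Finset.sum_add_sum_compl S _
    rw [Finset.sum_congr rfl fun u _ => h1 u, hk, hS,
      Finset.sum_image (fun i _ j _ h => hs h)]
  constructor
  · rintro ⟨u, hu, v, hv, huv, hw⟩
    -- internal weight positive
    have hint : 0 < ∑ u ∈ S, ∑ v ∈ S, w u v := by
      calc 0 < w u v := hw
        _ ≤ ∑ v' ∈ S, w u v' := Finset.single_le_sum (fun _ _ => Nat.zero_le _) hv
        _ ≤ ∑ u' ∈ S, ∑ v' ∈ S, w u' v' :=
            Finset.single_le_sum (f := fun u' => ∑ v' ∈ S, w u' v')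
              (fun _ _ => Nat.zero_le _) hu
    have hcutS : cutW wS S < k := by rw [hcut_eq]; omega
    refine ⟨?_, hcutS, ?_⟩
    · rw [hS, Finset.card_image_of_injective _ hs, Finset.card_univ, Fintype.card_fin]
      omega
    · refine ⟨⟨s ⟨0, by omega⟩, (hmem _).mpr ⟨_, rfl⟩⟩, ?_⟩
      intro Y hY hYne
      -- index set of Y
      set T : Finset (Fin σ) := Finset.univ.filter (fun i => s i ∈ Y) with hT
      have hTmem : ∀ i : Fin σ, i ∈ T ↔ s i ∈ Y := by intro i; simp [hT]
      have hTne : T.Nonempty := by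
        obtain ⟨y, hy⟩ := hYne
        obtain ⟨i, rfl⟩ := (hmem y).mp (hY.1 hy)
        exact ⟨i, (hTmem i).mpr hy⟩
      have hTproper : T ≠ univ := by
        obtain ⟨x, hxS, hxY⟩ := Finset.exists_of_ssubset hY
        obtain ⟨i, rfl⟩ := (hmem x).mp hxS
        intro h
        exact hxY ((hTmem i).mp (h ▸ mem_univ i))
      -- first crossing: i₁ ∈ T, cnxt i₁ ∉ T
      have hc1 : ∃ i₁, i₁ ∈ T ∧ cnxt i₁ ∉ T := by
        by_contra h
        push_neg at h
        exact hTproper (cycle_closed_eq_univ T h hTne)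
      -- second crossing: i₂ ∉ T, cnxt i₂ ∈ T
      have hc2 : ∃ i₂, i₂ ∉ T ∧ cnxt i₂ ∈ T := by
        by_contra h
        push_neg at h
        have hcl : ∀ i ∈ Tᶜ, cnxt i ∈ Tᶜ := fun i hi =>
          mem_compl.mpr (h i (mem_compl.mp hi))
        have hne : Tᶜ.Nonempty := by
          rw [← Finset.card_pos, Finset.card_compl]
          have : T.card < Fintype.card (Fin σ) :=
            lt_of_le_of_ne (Finset.card_le_univ T)
              (fun hh => hTproper (Finset.card_eq_iff_eq_univ T |>.mp hh))
          omega
        have := cycle_closed_eq_univ Tᶜ hcl hne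
        rw [Finset.compl_eq_univ_iff] at this
        exact hTne.ne_empty this
      obtain ⟨i₁, hi₁, hni₁⟩ := hc1
      obtain ⟨i₂, hni₂, hi₂⟩ := hc2
      -- the two crossing ordered pairs
      set p₁ : V × V := (s i₁, s (cnxt i₁)) with hp₁
      set p₂ : V × V := (s (cnxt i₂), s i₂) with hp₂
      have hp₁mem : p₁ ∈ Y ×ˢ Yᶜ := by
        rw [Finset.mem_product]
        exact ⟨(hTmem i₁).mp hi₁, mem_compl.mpr (fun h => hni₁ ((hTmem _).mpr h))⟩
      have hp₂mem : p₂ ∈ Y ×ˢ Yᶜ := by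
        rw [Finset.mem_product]
        exact ⟨(hTmem _).mp hi₂, mem_compl.mpr (fun h => hni₂ ((hTmem _).mpr h))⟩
      have hpne : p₁ ≠ p₂ := by
        intro h
        rw [Prod.ext_iff] at h
        have h1 : i₁ = cnxt i₂ := hs h.1
        have h2 : i₂ = cnxt i₁ := (hs h.2).symm
        have : (i₁ : ℕ) = (((i₁ : ℕ) + 1) % σ + 1) % σ := by
          conv_lhs => rw [h1, h2]
          rfl
        rw [Nat.mod_add_mod] at this
        have hlt := i₁.isLt
        rcases Nat.lt_or_ge ((i₁ : ℕ) + 1 + 1) σ with hc | hc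
        · rw [Nat.mod_eq_of_lt hc] at this; omega
        · have h3 : ((i₁ : ℕ) + 1 + 1) % σ = (i₁ : ℕ) + 1 + 1 - σ := by
            rw [Nat.mod_eq_sub_mod hc]
            exact Nat.mod_eq_of_lt (by omega)
          rw [h3] at this
          omega
      -- each heavy pair has weight ≥ k+1
      have hw₁ : k + 1 ≤ wS p₁.1 p₁.2 := by
        rw [hwS]
        have : (∃ i j : Fin σ, (j : ℕ) = ((i : ℕ) + 1) % σ ∧
            ((p₁.1 = s i ∧ p₁.2 = s j) ∨ (p₁.2 = s i ∧ p₁.1 = s j))) :=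
          ⟨i₁, cnxt i₁, rfl, Or.inl ⟨rfl, rfl⟩⟩
        rw [if_pos this]
        omega
      have hw₂ : k + 1 ≤ wS p₂.1 p₂.2 := by
        rw [hwS]
        have : (∃ i j : Fin σ, (j : ℕ) = ((i : ℕ) + 1) % σ ∧
            ((p₂.1 = s i ∧ p₂.2 = s j) ∨ (p₂.2 = s i ∧ p₂.1 = s j))) :=
          ⟨i₂, cnxt i₂, rfl, Or.inr ⟨rfl, rfl⟩⟩
        rw [if_pos this]
        omega
      -- cut of Y is at least 2k+2
      have hbig : 2 * k + 2 ≤ cutW wS Y := by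
        have hsub : ({p₁, p₂} : Finset (V × V)) ⊆ Y ×ˢ Yᶜ := by
          intro p hp
          rcases Finset.mem_insert.mp hp with rfl | hp
          · exact hp₁mem
          · rw [Finset.mem_singleton] at hp; subst hp; exact hp₂mem
        calc 2 * k + 2 ≤ wS p₁.1 p₁.2 + wS p₂.1 p₂.2 := by omega
          _ = ∑ p ∈ ({p₁, p₂} : Finset (V × V)), wS p.1 p.2 :=
              (Finset.sum_pair (f := fun p : V × V => wS p.1 p.2) hpne).symm
          _ ≤ ∑ p ∈ Y ×ˢ Yᶜ, wS p.1 p.2 :=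
              Finset.sum_le_sum_of_subset hsub
          _ = cutW wS Y := by rw [cutW, Finset.sum_product]
      have hcutS' : cutW wS S ≤ k := by rw [hcut_eq]; omega
      omega
  · rintro ⟨-, hcut, -⟩
    rw [hcut_eq] at hcut
    have hint : 0 < ∑ u ∈ S, ∑ v ∈ S, w u v := by omega
    obtain ⟨u, hu, hu0⟩ := Finset.exists_ne_zero_of_sum_ne_zero (by omega :
      (∑ u ∈ S, ∑ v ∈ S, w u v) ≠ 0)
    obtain ⟨v, hv, hv0⟩ := Finset.exists_ne_zero_of_sum_ne_zero hu0
    refine ⟨u, hu, v, hv, ?_, Nat.pos_of_ne_zero hv0⟩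
    intro h
    rw [h, hloop v] at hv0
    exact hv0 rfl
end

section
/- In the setting of the heavy-cycle construction: let G = (V,E,w) be a finite undirected graph with positive integer edge weights, S = {s_0,…,s_{σ−1}} ⊆ V with σ ≥ 3 distinct vertices, k = Σ_{v∈S} deg_w(v), and G_S the graph obtained from G by adding weight k+1 to each cycle edge {s_i, s_{(i+1) mod σ}}. Fix any x ∈ S. Then every set T ⊆ V with x ∈ T, |T| < σ+1, and cut value of T in G_S strictly less than k satisfies T = S. In particular, if S is an independent set in G (no edge of G has both endpoints in S), then no such set T exists. -/
open Finset

/-- Heavy-cycle construction: for any `x ∈ S`, the only candidate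
`(x, σ+1, k)`-set in `G_S` is `S` itself; in particular if `S` is independent in
`G` then no such set exists. -/
theorem heavy_cycle_only_S {V : Type*} [Fintype V] [DecidableEq V]
    (w : V → V → ℕ) (hsymm : ∀ u v, w u v = w v u) (hloop : ∀ v, w v v = 0)
    (σ : ℕ) (hσ : 3 ≤ σ) (s : Fin σ → V) (hs : Function.Injective s)
    (k : ℕ) (hk : k = ∑ i : Fin σ, ∑ u : V, w (s i) u)
    (wS : V → V → ℕ)
    (hwS : ∀ a b, wS a b = w a b +
      (if ∃ i j : Fin σ, (j : ℕ) = ((i : ℕ) + 1) % σ ∧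
          ((a = s i ∧ b = s j) ∨ (b = s i ∧ a = s j)) then k + 1 else 0))
    (j₀ : Fin σ) :
    (∀ T : Finset V, s j₀ ∈ T → T.card < σ + 1 → cutW wS T < k →
      T = Finset.image s Finset.univ) ∧
    ((∀ i j : Fin σ, w (s i) (s j) = 0) →
      ¬ ∃ T : Finset V, s j₀ ∈ T ∧ T.card < σ + 1 ∧ cutW wS T < k) := by
  haveI : NeZero σ := ⟨by omega⟩
  have main : ∀ T : Finset V, s j₀ ∈ T → T.card < σ + 1 → cutW wS T < k →
      T = Finset.image s Finset.univ := by
    intro T hxT hcard hcut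
    have hstep : ∀ i : Fin σ, s i ∈ T → s (i + 1) ∈ T := by
      intro i hi
      by_contra hni
      have hmem : s (i + 1) ∈ Tᶜ := Finset.mem_compl.mpr hni
      have hval : ((i + 1 : Fin σ) : ℕ) = ((i : ℕ) + 1) % σ := by
        have h1 : ((1 : Fin σ) : ℕ) = 1 % σ := Fin.val_one' σ
        rw [Fin.add_def, h1, Nat.mod_eq_of_lt (show 1 < σ by omega)]
      have hterm : k + 1 ≤ wS (s i) (s (i + 1)) := by
        rw [hwS]
        rw [if_pos ⟨i, i + 1, hval, Or.inl ⟨rfl, rfl⟩⟩]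
        omega
      have h1 : wS (s i) (s (i + 1)) ≤ ∑ v ∈ Tᶜ, wS (s i) v :=
        Finset.single_le_sum (fun _ _ => Nat.zero_le _) hmem
      have h2 : (∑ v ∈ Tᶜ, wS (s i) v) ≤ cutW wS T :=
        Finset.single_le_sum (f := fun u => ∑ v ∈ Tᶜ, wS u v)
          (fun _ _ => Nat.zero_le _) hi
      omega
    have hall : ∀ j : Fin σ, s j ∈ T := by
      open Fin.NatCast in
      have key : ∀ n : ℕ, s (j₀ + (n : Fin σ)) ∈ T := by
        intro n
        induction n with
        | zero => simpa using hxT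
        | succ m ih =>
          have : ((m + 1 : ℕ) : Fin σ) = (m : Fin σ) + 1 := by push_cast; ring
          rw [this, ← add_assoc]
          exact hstep _ ih
      intro j
      have := key ((j - j₀ : Fin σ) : ℕ)
      rwa [Fin.cast_val_eq_self, add_comm, sub_add_cancel] at this
    have hsub : Finset.image s Finset.univ ⊆ T := by
      intro v hv
      obtain ⟨j, _, rfl⟩ := Finset.mem_image.mp hv
      exact hall j
    have hcardim : (Finset.image s Finset.univ).card = σ := by
      rw [Finset.card_image_of_injective _ hs, Finset.card_univ, Fintype.card_fin]
    exact (Finset.eq_of_subset_of_card_le hsub (by omega)).symm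
  refine ⟨main, ?_⟩
  rintro hind ⟨T, h1, h2, h3⟩
  have hT : T = Finset.image s Finset.univ := main T h1 h2 h3
  subst hT
  have hfin : cutW wS (Finset.image s Finset.univ) = k := by
    have hinj : ∀ a ∈ Finset.univ, ∀ b ∈ Finset.univ, s a = s b → a = b :=
      fun a _ b _ h => hs h
    have hws : ∀ i : Fin σ, ∀ v ∈ (Finset.image s Finset.univ)ᶜ,
        wS (s i) v = w (s i) v := by
      intro i v hv
      rw [hwS, if_neg, add_zero]
      rintro ⟨i', j', hj, (⟨ha, hb⟩ | ⟨hb, ha⟩)⟩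
      · exact Finset.mem_compl.mp hv (hb ▸ Finset.mem_image_of_mem s (Finset.mem_univ j'))
      · exact Finset.mem_compl.mp hv (hb ▸ Finset.mem_image_of_mem s (Finset.mem_univ i'))
    have step1 : cutW wS (Finset.image s Finset.univ)
        = ∑ i : Fin σ, ∑ v ∈ (Finset.image s Finset.univ)ᶜ, w (s i) v := by
      unfold cutW
      rw [Finset.sum_image hinj]
      exact Finset.sum_congr rfl fun i _ => Finset.sum_congr rfl (hws i)
    rw [step1, hk]
    refine Finset.sum_congr rfl fun i _ => ?_
    have hsplit : (∑ u ∈ Finset.image s Finset.univ, w (s i) u)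
        + ∑ u ∈ (Finset.image s Finset.univ)ᶜ, w (s i) u = ∑ u : V, w (s i) u :=
      Finset.sum_add_sum_compl _ _
    have hzero : (∑ u ∈ Finset.image s Finset.univ, w (s i) u) = 0 := by
      rw [Finset.sum_image hinj]
      exact Finset.sum_eq_zero fun j _ => hind i j
    omega
  omega
end

section
/- Let G = (V,E) be a d-regular simple unweighted graph on n vertices and let t ≥ 2 be an integer. Define the weighted graph G' whose vertex set is {x} ∪ V ∪ E (a terminal node x, a vertex node for each v ∈ V, and an edge node for each e ∈ E), with the following weighted edges: an edge {x, v} of weight d for every v ∈ V, and for every e = {u,v} ∈ E, edges {e, u} and {e, v} each of weight 1. Let σ = 2 + t + t(t−1)/2 and k = dn − 2·(t(t−1)/2) + 1 = dn − t(t−1) + 1. Then G' contains a set S' with x ∈ S', |S'| < σ, and cut value w(δ_{G'}(S')) < k if and only if G contains a clique on t vertices. -/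
open Finset

/-- The weighted graph `G'` of the clique reduction: a terminal node, a vertex
node for each vertex of `G`, and an edge node for each edge of `G`; the terminal
is joined to each vertex node with weight `d`, and each edge node is joined to
its two endpoints with weight `1`. -/
def cliqueWeights {V : Type*} [DecidableEq V] (G : SimpleGraph V) (d : ℕ) :
    (Unit ⊕ V ⊕ G.edgeSet) → (Unit ⊕ V ⊕ G.edgeSet) → ℕ
  | Sum.inl _, Sum.inr (Sum.inl _) => d
  | Sum.inr (Sum.inl _), Sum.inl _ => d
  | Sum.inr (Sum.inr e), Sum.inr (Sum.inl v) => if v ∈ (e : Sym2 V) then 1 else 0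
  | Sum.inr (Sum.inl v), Sum.inr (Sum.inr e) => if v ∈ (e : Sym2 V) then 1 else 0
  | _, _ => 0

namespace CliqueRed

variable {V : Type*} [Fintype V] [DecidableEq V] (G : SimpleGraph V) [DecidableRel G.Adj]

/-- vertex nodes of `S'`. -/
def vA (S' : Finset (Unit ⊕ V ⊕ G.edgeSet)) : Finset V :=
  univ.filter (fun v => Sum.inr (Sum.inl v) ∈ S')

/-- edge nodes of `S'`. -/
def eF (S' : Finset (Unit ⊕ V ⊕ G.edgeSet)) : Finset G.edgeSet :=
  univ.filter (fun e => Sum.inr (Sum.inr e) ∈ S')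

lemma vi_inj : Function.Injective (fun v : V => (Sum.inr (Sum.inl v) : Unit ⊕ V ⊕ G.edgeSet)) := by
  intro a b h; simpa using h

lemma ei_inj :
    Function.Injective (fun e : G.edgeSet => (Sum.inr (Sum.inr e) : Unit ⊕ V ⊕ G.edgeSet)) := by
  intro a b h; simpa using h

lemma S'_eq (S' : Finset (Unit ⊕ V ⊕ G.edgeSet)) (hx : Sum.inl () ∈ S') :
    S' = insert (Sum.inl ())
      (((vA G S').image (fun v => Sum.inr (Sum.inl v))) ∪
        ((eF G S').image (fun e => Sum.inr (Sum.inr e)))) := by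
  ext z
  rcases z with u | v | e
  · cases u; simp [hx]
  · simp [vA]
  · simp [eF]

lemma card_S' (S' : Finset (Unit ⊕ V ⊕ G.edgeSet)) (hx : Sum.inl () ∈ S') :
    S'.card = 1 + (vA G S').card + (eF G S').card := by
  conv_lhs => rw [S'_eq G S' hx]
  rw [card_insert_of_notMem (by simp), card_union_of_disjoint (by
    simp [Finset.disjoint_left]),
    card_image_of_injective _ (vi_inj G), card_image_of_injective _ (ei_inj G)]
  omega

/-- number of vertices of an edge is 2 -/
lemma card_ends (e : G.edgeSet) :
    (univ.filter (fun v => v ∈ (e : Sym2 V))).card = 2 := by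
  obtain ⟨e, he⟩ := e
  induction e with
  | _ a b =>
    rw [SimpleGraph.mem_edgeSet] at he
    have hab : a ≠ b := G.ne_of_adj he
    have : (univ.filter (fun v => v ∈ (s(a, b) : Sym2 V))) = {a, b} := by
      ext v; simp [Sym2.mem_iff]
    rw [this, card_insert_of_notMem (by simp [hab]), card_singleton]

/-- number of edges through a vertex is the degree -/
lemma card_through (v : V) :
    (univ.filter (fun e : G.edgeSet => v ∈ (e : Sym2 V))).card = G.degree v := by
  rw [← G.card_incidenceFinset_eq_degree v]
  refine Finset.card_bij (fun e _ => (e : Sym2 V)) ?_ ?_ ?_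
  · intro e he
    rw [SimpleGraph.mem_incidenceFinset]
    exact ⟨e.2, by simpa using he⟩
  · intro a _ b _ h; exact Subtype.ext h
  · intro e he
    rw [SimpleGraph.mem_incidenceFinset] at he
    exact ⟨⟨e, he.1⟩, by simpa using he.2, rfl⟩

/-- the graph induced on a vertex subset -/
def inducedOn (A : Finset V) : SimpleGraph V where
  Adj a b := a ∈ A ∧ b ∈ A ∧ G.Adj a b
  symm := ⟨by rintro a b ⟨ha, hb, h⟩; exact ⟨hb, ha, h.symm⟩⟩
  loopless := ⟨by rintro a ⟨_, _, h⟩; exact (G.ne_of_adj h) rfl⟩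

instance (A : Finset V) : DecidableRel (inducedOn G A).Adj :=
  fun a b => inferInstanceAs (Decidable (a ∈ A ∧ b ∈ A ∧ G.Adj a b))

lemma inducedOn_nbr (A : Finset V) (v : V) :
    (inducedOn G A).neighborFinset v ⊆ A.erase v := by
  intro u hu
  rw [SimpleGraph.mem_neighborFinset] at hu
  obtain ⟨hv, hu', hadj⟩ := hu
  exact Finset.mem_erase.2 ⟨hadj.ne', hu'⟩

lemma inducedOn_deg_zero (A : Finset V) (v : V) (hv : v ∉ A) :
    (inducedOn G A).degree v = 0 := by
  rw [← SimpleGraph.card_neighborFinset_eq_degree, Finset.card_eq_zero]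
  ext u
  simp only [SimpleGraph.mem_neighborFinset, Finset.notMem_empty, iff_false]
  rintro ⟨h, -, -⟩; exact hv h

lemma card_inner (A : Finset V) :
    (univ.filter (fun e : G.edgeSet => ∀ v ∈ (e : Sym2 V), v ∈ A)).card
      = (inducedOn G A).edgeFinset.card := by
  refine Finset.card_bij (fun e _ => (e : Sym2 V)) ?_ ?_ ?_
  · rintro ⟨e, he⟩ hmem
    simp only [mem_filter, mem_univ, true_and] at hmem
    rw [SimpleGraph.mem_edgeFinset]
    induction e with
    | _ a b =>
      rw [SimpleGraph.mem_edgeSet] at he ⊢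
      exact ⟨hmem a (by simp), hmem b (by simp), he⟩
  · intro a _ b _ h; exact Subtype.ext h
  · rintro e he
    rw [SimpleGraph.mem_edgeFinset] at he
    induction e with
    | _ a b =>
      obtain ⟨ha, hb, hadj⟩ := he
      refine ⟨⟨s(a, b), hadj⟩, ?_, rfl⟩
      simp only [mem_filter, mem_univ, true_and]
      intro v hv
      rcases Sym2.mem_iff.1 hv with rfl | rfl
      exacts [ha, hb]

lemma deg_sum_eq (A : Finset V) :
    ∑ v ∈ A, (inducedOn G A).degree v
      = 2 * (univ.filter (fun e : G.edgeSet => ∀ v ∈ (e : Sym2 V), v ∈ A)).card := by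
  rw [card_inner, ← SimpleGraph.sum_degrees_eq_twice_card_edges]
  refine Finset.sum_subset (Finset.subset_univ A) ?_
  intro v _ hv
  exact inducedOn_deg_zero G A v hv

lemma isNClique_of (A : Finset V) (t : ℕ) (ht : 2 ≤ t) (hA : A.card ≤ t)
    (hF : t * (t - 1) / 2 ≤ (univ.filter (fun e : G.edgeSet => ∀ v ∈ (e : Sym2 V), v ∈ A)).card) :
    G.IsNClique t A := by
  have heven : Even (t * (t - 1)) := by
    have := Nat.even_mul_succ_self (t - 1)
    have h1 : t - 1 + 1 = t := by omega
    rw [h1] at this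
    rwa [mul_comm]
  have h2 : 2 * (t * (t - 1) / 2) = t * (t - 1) := Nat.two_mul_div_two_of_even heven
  have hsum : t * (t - 1) ≤ ∑ v ∈ A, (inducedOn G A).degree v := by
    rw [deg_sum_eq, ← h2]
    exact Nat.mul_le_mul_left 2 hF
  have hub : ∀ v ∈ A, (inducedOn G A).degree v ≤ A.card - 1 := by
    intro v hv
    rw [← SimpleGraph.card_neighborFinset_eq_degree]
    calc ((inducedOn G A).neighborFinset v).card ≤ (A.erase v).card :=
          Finset.card_le_card (inducedOn_nbr G A v)
      _ = A.card - 1 := Finset.card_erase_of_mem hv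
  have hsub : ∑ v ∈ A, (inducedOn G A).degree v ≤ A.card * (A.card - 1) := by
    calc ∑ v ∈ A, (inducedOn G A).degree v ≤ ∑ _v ∈ A, (A.card - 1) :=
          Finset.sum_le_sum hub
      _ = A.card * (A.card - 1) := by rw [Finset.sum_const, smul_eq_mul]
  have hcardA : A.card = t := by
    by_contra h
    have hlt : A.card < t := lt_of_le_of_ne hA h
    have : A.card * (A.card - 1) < t * (t - 1) :=
      Nat.mul_lt_mul_of_lt_of_le hlt (by omega) (by omega)
    omega
  have hAll : ∀ v ∈ A, (inducedOn G A).degree v = A.card - 1 := by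
    intro v hv
    by_contra h
    have hvlt : (inducedOn G A).degree v < A.card - 1 := lt_of_le_of_ne (hub v hv) h
    have : ∑ v ∈ A, (inducedOn G A).degree v < ∑ _v ∈ A, (A.card - 1) :=
      Finset.sum_lt_sum hub ⟨v, hv, hvlt⟩
    rw [Finset.sum_const, smul_eq_mul, hcardA] at this
    omega
  constructor
  · intro a ha b hb hne
    have hdeg : ((inducedOn G A).neighborFinset a).card = (A.erase a).card := by
      rw [SimpleGraph.card_neighborFinset_eq_degree, hAll a ha,
        Finset.card_erase_of_mem ha]
    have heq : (inducedOn G A).neighborFinset a = A.erase a :=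
      Finset.eq_of_subset_of_card_le (inducedOn_nbr G A a) (le_of_eq hdeg.symm)
    have hb' : b ∈ (inducedOn G A).neighborFinset a := by
      rw [heq]; exact Finset.mem_erase.2 ⟨hne.symm, hb⟩
    rw [SimpleGraph.mem_neighborFinset] at hb'
    exact hb'.2.2
  · exact hcardA

lemma count_clique (s : Finset V) (hc : G.IsClique ↑s) :
    2 * (univ.filter (fun e : G.edgeSet => ∀ v ∈ (e : Sym2 V), v ∈ s)).card
      = s.card * (s.card - 1) := by
  rw [← deg_sum_eq]
  have : ∀ v ∈ s, (inducedOn G s).degree v = s.card - 1 := by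
    intro v hv
    rw [← SimpleGraph.card_neighborFinset_eq_degree]
    have heq : (inducedOn G s).neighborFinset v = s.erase v := by
      apply Finset.Subset.antisymm (inducedOn_nbr G s v)
      intro u hu
      obtain ⟨hne, hus⟩ := Finset.mem_erase.1 hu
      rw [SimpleGraph.mem_neighborFinset]
      exact ⟨hv, hus, hc hv hus hne.symm⟩
    rw [heq, Finset.card_erase_of_mem hv]
  rw [Finset.sum_congr rfl this, Finset.sum_const, smul_eq_mul]

lemma sum_compl_eq (S' : Finset (Unit ⊕ V ⊕ G.edgeSet)) (g : (Unit ⊕ V ⊕ G.edgeSet) → ℕ) :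
    ∑ z ∈ S'ᶜ, g z = ∑ z : (Unit ⊕ V ⊕ G.edgeSet), if z ∈ S' then 0 else g z := by
  have h : S'ᶜ = univ.filter (fun z => ¬ z ∈ S') := by ext z; simp
  rw [h, Finset.sum_filter]
  exact Finset.sum_congr rfl (fun z _ => by split_ifs with h1 h2 h2 <;> simp_all

)

/-- The master cut formula. -/
lemma cut_formula (d : ℕ) (hreg : G.IsRegularOfDegree d)
    (S' : Finset (Unit ⊕ V ⊕ G.edgeSet)) (hx : Sum.inl () ∈ S') :
    cutW (cliqueWeights G d) S'
        + 2 * ∑ e ∈ eF G S', ((vA G S').filter (fun v => v ∈ (e : Sym2 V))).card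
      = d * Fintype.card V + 2 * (eF G S').card := by
  set A := vA G S' with hA
  set F := eF G S' with hF
  have hvmem : ∀ v : V, (Sum.inr (Sum.inl v) : Unit ⊕ V ⊕ G.edgeSet) ∈ S' ↔ v ∈ A := by
    intro v; simp [hA, vA]
  have hemem : ∀ e : G.edgeSet, (Sum.inr (Sum.inr e) : Unit ⊕ V ⊕ G.edgeSet) ∈ S' ↔ e ∈ F := by
    intro e; simp [hF, eF]
  -- compute the cut
  have hcut : cutW (cliqueWeights G d) S'
      = d * Aᶜ.card + ∑ v ∈ A, (Fᶜ.filter (fun e : G.edgeSet => v ∈ (e : Sym2 V))).card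
        + ∑ e ∈ F, (Aᶜ.filter (fun v => v ∈ (e : Sym2 V))).card := by
    have hdecomp : ∀ g : (Unit ⊕ V ⊕ G.edgeSet) → ℕ,
        ∑ u ∈ S', g u = g (Sum.inl ())
          + ∑ v ∈ A, g (Sum.inr (Sum.inl v)) + ∑ e ∈ F, g (Sum.inr (Sum.inr e)) := by
      intro g
      conv_lhs => rw [S'_eq G S' hx]
      rw [Finset.sum_insert (by simp), Finset.sum_union (by simp [Finset.disjoint_left]),
        Finset.sum_image (fun a _ b _ h => vi_inj G h),
        Finset.sum_image (fun a _ b _ h => ei_inj G h), ← hA, ← hF, add_assoc]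
    have hterm : ∑ z ∈ S'ᶜ, cliqueWeights G d (Sum.inl ()) z = d * Aᶜ.card := by
      rw [sum_compl_eq, Fintype.sum_sum_type, Fintype.sum_sum_type]
      have h0 : ∀ u : Unit,
          (if (Sum.inl u : Unit ⊕ V ⊕ G.edgeSet) ∈ S' then 0
            else cliqueWeights G d (Sum.inl ()) (Sum.inl u)) = 0 := by
        intro u; cases u; simp [hx, cliqueWeights]
      have h2 : ∀ e : G.edgeSet,
          (if (Sum.inr (Sum.inr e) : Unit ⊕ V ⊕ G.edgeSet) ∈ S' then 0
            else cliqueWeights G d (Sum.inl ()) (Sum.inr (Sum.inr e))) = 0 := by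
        intro e; simp [cliqueWeights]
      rw [Finset.sum_congr rfl (fun u _ => h0 u), Finset.sum_congr rfl (fun e _ => h2 e)]
      simp only [Finset.sum_const_zero, zero_add, add_zero]
      have h1 : ∀ v : V,
          (if (Sum.inr (Sum.inl v) : Unit ⊕ V ⊕ G.edgeSet) ∈ S' then 0
            else cliqueWeights G d (Sum.inl ()) (Sum.inr (Sum.inl v)))
          = if v ∈ Aᶜ then d else 0 := by
        intro v
        by_cases hv : v ∈ A <;> simp [(hvmem v), hv, cliqueWeights]
      rw [Finset.sum_congr rfl (fun v _ => h1 v), Finset.sum_ite_mem,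
        Finset.univ_inter, Finset.sum_const, smul_eq_mul, mul_comm]
    have hvert : ∀ v ∈ A, ∑ z ∈ S'ᶜ, cliqueWeights G d (Sum.inr (Sum.inl v)) z
        = (Fᶜ.filter (fun e : G.edgeSet => v ∈ (e : Sym2 V))).card := by
      intro v hv
      rw [sum_compl_eq, Fintype.sum_sum_type, Fintype.sum_sum_type]
      have h0 : ∀ u : Unit,
          (if (Sum.inl u : Unit ⊕ V ⊕ G.edgeSet) ∈ S' then 0
            else cliqueWeights G d (Sum.inr (Sum.inl v)) (Sum.inl u)) = 0 := by
        intro u; cases u; simp [hx]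
      have h1 : ∀ u : V,
          (if (Sum.inr (Sum.inl u) : Unit ⊕ V ⊕ G.edgeSet) ∈ S' then 0
            else cliqueWeights G d (Sum.inr (Sum.inl v)) (Sum.inr (Sum.inl u))) = 0 := by
        intro u; simp [cliqueWeights]
      rw [Finset.sum_congr rfl (fun u _ => h0 u), Finset.sum_congr rfl (fun u _ => h1 u)]
      simp only [Finset.sum_const_zero, zero_add]
      have h2 : ∀ e : G.edgeSet,
          (if (Sum.inr (Sum.inr e) : Unit ⊕ V ⊕ G.edgeSet) ∈ S' then 0
            else cliqueWeights G d (Sum.inr (Sum.inl v)) (Sum.inr (Sum.inr e)))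
          = if e ∈ Fᶜ then (if v ∈ (e : Sym2 V) then 1 else 0) else 0 := by
        intro e
        by_cases he : e ∈ F <;> simp [(hemem e), he, cliqueWeights]
      rw [Finset.sum_congr rfl (fun e _ => h2 e), Finset.sum_ite_mem, Finset.univ_inter,
        Finset.card_filter]
    have hedge : ∀ e ∈ F, ∑ z ∈ S'ᶜ, cliqueWeights G d (Sum.inr (Sum.inr e)) z
        = (Aᶜ.filter (fun v => v ∈ (e : Sym2 V))).card := by
      intro e he
      rw [sum_compl_eq, Fintype.sum_sum_type, Fintype.sum_sum_type]
      have h0 : ∀ u : Unit,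
          (if (Sum.inl u : Unit ⊕ V ⊕ G.edgeSet) ∈ S' then 0
            else cliqueWeights G d (Sum.inr (Sum.inr e)) (Sum.inl u)) = 0 := by
        intro u; cases u; simp [hx, cliqueWeights]
      have h2 : ∀ e' : G.edgeSet,
          (if (Sum.inr (Sum.inr e') : Unit ⊕ V ⊕ G.edgeSet) ∈ S' then 0
            else cliqueWeights G d (Sum.inr (Sum.inr e)) (Sum.inr (Sum.inr e'))) = 0 := by
        intro e'; simp [cliqueWeights]
      rw [Finset.sum_congr rfl (fun u _ => h0 u), Finset.sum_congr rfl (fun e' _ => h2 e')]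
      simp only [Finset.sum_const_zero, zero_add, add_zero]
      have h1 : ∀ v : V,
          (if (Sum.inr (Sum.inl v) : Unit ⊕ V ⊕ G.edgeSet) ∈ S' then 0
            else cliqueWeights G d (Sum.inr (Sum.inr e)) (Sum.inr (Sum.inl v)))
          = if v ∈ Aᶜ then (if v ∈ (e : Sym2 V) then 1 else 0) else 0 := by
        intro v
        by_cases hv : v ∈ A <;> simp [(hvmem v), hv, cliqueWeights]
      rw [Finset.sum_congr rfl (fun v _ => h1 v), Finset.sum_ite_mem, Finset.univ_inter,
        Finset.card_filter]
    unfold cutW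
    rw [hdecomp (fun u => ∑ z ∈ S'ᶜ, cliqueWeights G d u z)]
    rw [hterm, Finset.sum_congr rfl hvert, Finset.sum_congr rfl hedge]
  -- double counting
  have hswap : ∑ v ∈ A, (F.filter (fun e : G.edgeSet => v ∈ (e : Sym2 V))).card
      = ∑ e ∈ F, (A.filter (fun v => v ∈ (e : Sym2 V))).card := by
    simp only [Finset.card_filter]
    exact Finset.sum_comm
  -- filter complement splits
  have hsplitF : ∀ v : V, (F.filter (fun e : G.edgeSet => v ∈ (e : Sym2 V))).card
      + (Fᶜ.filter (fun e : G.edgeSet => v ∈ (e : Sym2 V))).card = d := by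
    intro v
    rw [← Finset.card_union_of_disjoint
      (Finset.disjoint_filter_filter disjoint_compl_right),
      ← Finset.filter_union, Finset.union_compl, card_through, hreg v]
  have hsplitA : ∀ e ∈ F, (A.filter (fun v => v ∈ (e : Sym2 V))).card
      + (Aᶜ.filter (fun v => v ∈ (e : Sym2 V))).card = 2 := by
    intro e _
    rw [← Finset.card_union_of_disjoint
      (Finset.disjoint_filter_filter disjoint_compl_right),
      ← Finset.filter_union, Finset.union_compl, card_ends]
  have hAc : A.card + Aᶜ.card = Fintype.card V := Finset.card_add_card_compl A
  calc cutW (cliqueWeights G d) S' + 2 * ∑ e ∈ F, (A.filter (fun v => v ∈ (e : Sym2 V))).card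
      = d * Aᶜ.card
        + (∑ v ∈ A, (Fᶜ.filter (fun e : G.edgeSet => v ∈ (e : Sym2 V))).card
          + ∑ v ∈ A, (F.filter (fun e : G.edgeSet => v ∈ (e : Sym2 V))).card)
        + (∑ e ∈ F, (Aᶜ.filter (fun v => v ∈ (e : Sym2 V))).card
          + ∑ e ∈ F, (A.filter (fun v => v ∈ (e : Sym2 V))).card) := by
        rw [hcut, hswap]; ring
    _ = d * Aᶜ.card + ∑ v ∈ A, ((F.filter (fun e : G.edgeSet => v ∈ (e : Sym2 V))).card
          + (Fᶜ.filter (fun e : G.edgeSet => v ∈ (e : Sym2 V))).card)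
        + ∑ e ∈ F, ((A.filter (fun v => v ∈ (e : Sym2 V))).card
          + (Aᶜ.filter (fun v => v ∈ (e : Sym2 V))).card) := by
        rw [Finset.sum_add_distrib, Finset.sum_add_distrib]; ring
    _ = d * Aᶜ.card + ∑ _v ∈ A, d + ∑ e ∈ F, 2 := by
        rw [Finset.sum_congr rfl (fun v _ => hsplitF v), Finset.sum_congr rfl hsplitA]
    _ = d * Fintype.card V + 2 * F.card := by
        rw [Finset.sum_const, Finset.sum_const, smul_eq_mul, smul_eq_mul]
        rw [← hAc]; ring

end CliqueRed

open CliqueRed in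
/-- In the clique reduction graph `G'` built from a `d`-regular graph `G` on `n`
vertices, there is a set `S'` containing the terminal `x` with `|S'| < σ` and
cut value `< k = dn - t(t-1) + 1` iff `G` contains a clique on `t` vertices,
where `σ = 2 + t + t(t-1)/2`. -/
theorem clique_reduction {V : Type*} [Fintype V] [DecidableEq V]
    (G : SimpleGraph V) [DecidableRel G.Adj]
    (d t : ℕ) (ht : 2 ≤ t) (hreg : G.IsRegularOfDegree d) :
    (∃ S' : Finset (Unit ⊕ V ⊕ G.edgeSet), Sum.inl () ∈ S' ∧
        S'.card < 2 + t + t * (t - 1) / 2 ∧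
        ((cutW (cliqueWeights G d) S' : ℤ) <
          (d : ℤ) * (Fintype.card V : ℤ) - (t : ℤ) * ((t : ℤ) - 1) + 1)) ↔
      ∃ s : Finset V, G.IsNClique t s := by
  have hcastT : ((t * (t - 1) : ℕ) : ℤ) = (t : ℤ) * ((t : ℤ) - 1) := by
    have h1 : (1 : ℕ) ≤ t := by omega
    push_cast [Nat.cast_sub h1]
    ring
  have heven : Even (t * (t - 1)) := by
    have := Nat.even_mul_succ_self (t - 1)
    have h1 : t - 1 + 1 = t := by omega
    rw [h1] at this
    rwa [mul_comm]
  have h2T : 2 * (t * (t - 1) / 2) = t * (t - 1) := Nat.two_mul_div_two_of_even heven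
  constructor
  · rintro ⟨S', hx, hcard, hcut⟩
    set A := vA G S' with hA
    set F := eF G S' with hF
    set m := ∑ e ∈ F, (A.filter (fun v => v ∈ (e : Sym2 V))).card with hm
    have hmf := cut_formula G d hreg S' hx
    rw [← hA, ← hF, ← hm] at hmf
    -- from the cut bound
    have hcut' : cutW (cliqueWeights G d) S' + t * (t - 1) ≤ d * Fintype.card V := by
      have : (cutW (cliqueWeights G d) S' : ℤ) + ((t * (t - 1) : ℕ) : ℤ)
          ≤ (d : ℤ) * (Fintype.card V : ℤ) := by
        rw [hcastT]; linarith
      exact_mod_cast this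
    -- the doubly-covered edges
    set F₂ := F.filter (fun e : G.edgeSet => (A.filter (fun v => v ∈ (e : Sym2 V))).card = 2) with hF₂
    have hcA2 : ∀ e : G.edgeSet, (A.filter (fun v => v ∈ (e : Sym2 V))).card ≤ 2 := by
      intro e
      rw [← card_ends G e]
      exact Finset.card_le_card (Finset.filter_subset_filter _ (Finset.subset_univ A))
    have hmle : m ≤ F.card + F₂.card := by
      rw [hm]
      calc ∑ e ∈ F, (A.filter (fun v => v ∈ (e : Sym2 V))).card
          ≤ ∑ e ∈ F, (1 + if (A.filter (fun v => v ∈ (e : Sym2 V))).card = 2 then 1 else 0) := by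
            apply Finset.sum_le_sum
            intro e _
            by_cases h : (A.filter (fun v => v ∈ (e : Sym2 V))).card = 2
            · simp [h]
            · have := hcA2 e; simp only [h, if_false]; omega
        _ = F.card + F₂.card := by
            rw [Finset.sum_add_distrib, Finset.sum_const, smul_eq_mul, mul_one, hF₂,
              Finset.card_filter]
    have hF₂card : t * (t - 1) / 2 ≤ F₂.card := by
      have h1 : t * (t - 1) + 2 * F.card ≤ 2 * m := by omega
      have h2 : t * (t - 1) ≤ 2 * F₂.card := by omega
      omega
    -- F₂ edges lie inside A
    have hsubF₂ : F₂ ⊆ univ.filter (fun e : G.edgeSet => ∀ v ∈ (e : Sym2 V), v ∈ A) := by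
      intro e he
      rw [hF₂, Finset.mem_filter] at he
      obtain ⟨-, hcard2⟩ := he
      rw [Finset.mem_filter]
      refine ⟨Finset.mem_univ _, ?_⟩
      have hsub : A.filter (fun v => v ∈ (e : Sym2 V)) ⊆ univ.filter (fun v => v ∈ (e : Sym2 V)) :=
        Finset.filter_subset_filter _ (Finset.subset_univ A)
      have : A.filter (fun v => v ∈ (e : Sym2 V)) = univ.filter (fun v => v ∈ (e : Sym2 V)) :=
        Finset.eq_of_subset_of_card_le hsub (by rw [card_ends G e, hcard2])
      intro v hv
      have : v ∈ A.filter (fun v => v ∈ (e : Sym2 V)) := by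
        rw [this, Finset.mem_filter]; exact ⟨Finset.mem_univ v, hv⟩
      exact (Finset.mem_filter.1 this).1
    have hFedges : t * (t - 1) / 2
        ≤ (univ.filter (fun e : G.edgeSet => ∀ v ∈ (e : Sym2 V), v ∈ A)).card :=
      le_trans hF₂card (Finset.card_le_card hsubF₂)
    -- card bound
    have hScard := card_S' G S' hx
    rw [← hA, ← hF] at hScard
    have hAt : A.card ≤ t := by
      have h1 : F₂.card ≤ F.card := Finset.card_le_card (Finset.filter_subset _ _)
      omega
    exact ⟨A, isNClique_of G A t ht hAt hFedges⟩
  · rintro ⟨s, hs⟩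
    obtain ⟨hclique, hcard⟩ := hs
    set Fs := univ.filter (fun e : G.edgeSet => ∀ v ∈ (e : Sym2 V), v ∈ s) with hFs
    set S' : Finset (Unit ⊕ V ⊕ G.edgeSet) := insert (Sum.inl ())
      ((s.image (fun v => Sum.inr (Sum.inl v))) ∪
        (Fs.image (fun e => Sum.inr (Sum.inr e)))) with hS'
    have hx : (Sum.inl () : Unit ⊕ V ⊕ G.edgeSet) ∈ S' := Finset.mem_insert_self _ _
    have hvA : vA G S' = s := by
      ext v; simp [vA, hS']
    have heF : eF G S' = Fs := by
      ext e; simp [eF, hS']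
    have hcount : 2 * Fs.card = t * (t - 1) := by
      rw [hFs, count_clique G s hclique, hcard]
    have hmf := cut_formula G d hreg S' hx
    rw [hvA, heF] at hmf
    have hall2 : ∀ e ∈ Fs, (s.filter (fun v => v ∈ (e : Sym2 V))).card = 2 := by
      intro e he
      rw [hFs, Finset.mem_filter] at he
      have : s.filter (fun v => v ∈ (e : Sym2 V)) = univ.filter (fun v => v ∈ (e : Sym2 V)) := by
        ext v
        simp only [Finset.mem_filter, Finset.mem_univ, true_and]
        exact ⟨fun h => h.2, fun h => ⟨he.2 v h, h⟩⟩
      rw [this, card_ends]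
    have hmsum : ∑ e ∈ Fs, (s.filter (fun v => v ∈ (e : Sym2 V))).card = 2 * Fs.card := by
      rw [Finset.sum_congr rfl hall2, Finset.sum_const, smul_eq_mul, mul_comm]
    rw [hmsum] at hmf
    have hcuteq : cutW (cliqueWeights G d) S' + t * (t - 1) = d * Fintype.card V := by omega
    refine ⟨S', hx, ?_, ?_⟩
    · have := card_S' G S' hx
      rw [hvA, heF, hcard] at this
      omega
    · have : (cutW (cliqueWeights G d) S' : ℤ) + ((t * (t - 1) : ℕ) : ℤ)
          = (d : ℤ) * (Fintype.card V : ℤ) := by exact_mod_cast hcuteq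
      rw [hcastT] at this
      linarith
end
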